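/- arXiv:2405.18134 — 2 statements merged into one kernel-verified Lean document; each statement's English description precedes it below -/
import Mathlib

section
/- Let P' be a shortest path in the t-spanner G' between p and q, let F be a matching in G, and suppose P' has at least two edges and contains at least one edge of F. Then the graph G \ F contains a walk between p and q of length at most 3·|P'|, where G is the graph obtained from G' by adding, for every edge {a,b} of G', the two edges {a,c} and {c,b} with c the minimizer of |ac|+|cb| over S \ {a,b}. -/
open Real

/-- Length of a walk in a graph whose vertices lie in a metric space:
the sum of the metric distances of consecutive vertices. -/
noncomputable def wlen {V : Type*} [PseudoMetricSpace V] {G : SimpleGraph V} {u v : V}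
    (w : G.Walk u v) : ℝ :=
  (w.darts.map fun d : G.Dart => dist d.toProd.1 d.toProd.2).sum

/-- Shortest-path distance between two vertices of a metrically weighted graph. -/
noncomputable def gdist {V : Type*} [PseudoMetricSpace V] (G : SimpleGraph V) (p q : V) : ℝ :=
  sInf {l : ℝ | ∃ w : G.Walk p q, wlen w = l}

/-- The set `F` of edges, viewed as a graph, has maximum degree at most `f`. -/
def maxDegLe {V : Type*} (F : Set (Sym2 V)) (f : ℕ) : Prop :=
  ∀ v : V, {e | e ∈ F ∧ v ∈ e}.encard ≤ (f : ℕ∞)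

lemma wlen_nil' {V : Type*} [PseudoMetricSpace V] {G : SimpleGraph V} {u : V} :
    wlen (SimpleGraph.Walk.nil : G.Walk u u) = 0 := by simp [wlen]

lemma wlen_cons' {V : Type*} [PseudoMetricSpace V] {G : SimpleGraph V} {u v w : V}
    (h : G.Adj u v) (p : G.Walk v w) :
    wlen (SimpleGraph.Walk.cons h p) = dist u v + wlen p := by
  simp [wlen]

lemma wlen_nonneg' {V : Type*} [PseudoMetricSpace V] {G : SimpleGraph V} {u v : V}
    (p : G.Walk u v) : 0 ≤ wlen p := by
  induction p with
  | nil => simp [wlen]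
  | cons h p ih => rw [wlen_cons']; exact add_nonneg dist_nonneg ih

theorem stmt5 {V : Type*} [Fintype V] [MetricSpace V] (t : ℝ) (ht : 1 ≤ t)
    (G' G : SimpleGraph V) (c : V → V → V)
    -- G' is a t-spanner for S
    (hspan : ∀ p q : V, gdist G' p q ≤ t * dist p q)
    (hcne : ∀ a b, G'.Adj a b → c a b ≠ a ∧ c a b ≠ b)
    (hcsymm : ∀ a b, c a b = c b a)
    (hcmin : ∀ a b, G'.Adj a b → ∀ x : V, x ≠ a → x ≠ b →
      dist a (c a b) + dist (c a b) b ≤ dist a x + dist x b)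
    -- G is obtained from G' by adding, for each edge {a,b} of G',
    -- the two edges {a, c a b} and {c a b, b}
    (hG : ∀ x y : V, G.Adj x y ↔ G'.Adj x y ∨ ∃ a b : V, G'.Adj a b ∧
      ((x = a ∧ y = c a b) ∨ (x = b ∧ y = c a b) ∨
       (y = a ∧ x = c a b) ∨ (y = b ∧ x = c a b)))
    -- F is a matching in G
    (F : Set (Sym2 V)) (hF : F ⊆ G.edgeSet) (hdeg : maxDegLe F 1)
    (p q : V) (hpq : p ≠ q)
    -- P' is a shortest path between p and q in G', with at least two edges,
    -- containing at least one edge of F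
    (P' : G'.Walk p q) (hP'path : P'.IsPath)
    (hP'short : wlen P' = gdist G' p q)
    (hP'len : 2 ≤ P'.length)
    (hP'F : ∃ e ∈ P'.edges, e ∈ F) :
    ∃ Q : (G.deleteEdges F).Walk p q, wlen Q ≤ 3 * wlen P' := by
  classical
  -- F is a matching: any two F-edges sharing a vertex coincide
  have hFuniq : ∀ e₁ ∈ F, ∀ e₂ ∈ F, ∀ z : V, z ∈ e₁ → z ∈ e₂ → e₁ = e₂ := by
    intro e₁ h₁ e₂ h₂ z hz₁ hz₂
    have h := hdeg z
    rw [Nat.cast_one, Set.encard_le_one_iff] at h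
    exact h e₁ e₂ ⟨h₁, hz₁⟩ ⟨h₂, hz₂⟩
  -- a G'-edge not in F survives in G \ F
  have hGsub : ∀ {x y : V}, G'.Adj x y → s(x,y) ∉ F → (G.deleteEdges F).Adj x y := by
    intro x y h hn
    exact SimpleGraph.deleteEdges_adj.mpr ⟨(hG x y).2 (Or.inl h), hn⟩
  have hAdj1 : ∀ {x y : V}, G'.Adj x y → G.Adj x (c x y) :=
    fun h => (hG _ _).2 (Or.inr ⟨_, _, h, Or.inl ⟨rfl, rfl⟩⟩)
  have hAdj2 : ∀ {x y : V}, G'.Adj x y → G.Adj (c x y) y :=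
    fun h => (hG _ _).2 (Or.inr ⟨_, _, h, Or.inr (Or.inr (Or.inr ⟨rfl, rfl⟩))⟩)
  -- detour edges around an F-edge survive in G \ F
  have hdet1 : ∀ {x y : V}, G'.Adj x y → s(x,y) ∈ F → (G.deleteEdges F).Adj x (c x y) := by
    intro x y h hmem
    refine SimpleGraph.deleteEdges_adj.mpr ⟨hAdj1 h, ?_⟩
    intro hc
    have heq := hFuniq _ hmem _ hc x (by simp) (by simp)
    rw [Sym2.eq_iff] at heq
    rcases heq with ⟨_, h2⟩ | ⟨h1, _⟩
    · exact (hcne x y h).2 h2.symm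
    · exact (hcne x y h).1 h1.symm
  have hdet2 : ∀ {x y : V}, G'.Adj x y → s(x,y) ∈ F → (G.deleteEdges F).Adj (c x y) y := by
    intro x y h hmem
    refine SimpleGraph.deleteEdges_adj.mpr ⟨hAdj2 h, ?_⟩
    intro hc
    have heq := hFuniq _ hmem _ hc y (by simp) (by simp)
    rw [Sym2.eq_iff] at heq
    rcases heq with ⟨h1, _⟩ | ⟨h1, h2⟩
    · exact (hcne x y h).1 h1.symm
    · exact h.ne h1
  -- main induction
  have key : ∀ n : ℕ, ∀ (a b : V) (w : G'.Walk a b), w.length ≤ n → w.IsPath →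
      (w.length = 1 → ∀ e ∈ w.edges, e ∉ F) →
      ∃ Q : (G.deleteEdges F).Walk a b, wlen Q ≤ 3 * wlen w := by
    intro n
    induction n with
    | zero =>
      intro a b w hlen _ _
      cases w with
      | nil => exact ⟨SimpleGraph.Walk.nil, by simp [wlen_nil']⟩
      | cons h p => simp [SimpleGraph.Walk.length_cons] at hlen
    | succ n ih =>
      intro a b w hlen hpath hinv
      cases w with
      | nil => exact ⟨SimpleGraph.Walk.nil, by simp [wlen_nil']⟩
      | cons h01 w1 =>
        rename_i x1
        rw [SimpleGraph.Walk.cons_isPath_iff] at hpath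
        obtain ⟨hpath1, hnm0⟩ := hpath
        by_cases hF0 : s(a, x1) ∈ F
        · -- first edge is an F-edge
          cases w1 with
          | nil =>
            exact absurd hF0 (hinv (by simp) _ (by simp))
          | cons h12 w2 =>
            rename_i x2
            rw [SimpleGraph.Walk.cons_isPath_iff] at hpath1
            obtain ⟨hpath2, hnm1⟩ := hpath1
            have hax1 : a ≠ x1 := h01.ne
            have hx1x2 : x1 ≠ x2 := h12.ne
            have hax2 : a ≠ x2 := by
              intro hEq
              exact hnm0 (by rw [SimpleGraph.Walk.support_cons]
                             exact List.mem_cons_of_mem _ (hEq ▸ w2.start_mem_support))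
            -- second edge is not in F (matching)
            have hF1 : s(x1, x2) ∉ F := by
              intro hmem
              have heq := hFuniq _ hF0 _ hmem x1 (by simp) (by simp)
              rw [Sym2.eq_iff] at heq
              rcases heq with ⟨h1, _⟩ | ⟨h2, _⟩
              · exact hax1 h1
              · exact hax2 h2
            -- generic pair step: detour the F-edge via c, then take the second edge,
            -- then proceed
            have pairStep : (w2.length = 1 → ∀ e ∈ w2.edges, e ∉ F) →
                ∃ Q : (G.deleteEdges F).Walk a b, wlen Q ≤ 3 * wlen (SimpleGraph.Walk.cons h01 (SimpleGraph.Walk.cons h12 w2)) := by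
              intro hinv2
              have hlen2 : w2.length ≤ n := by
                simp only [SimpleGraph.Walk.length_cons] at hlen; omega
              obtain ⟨Q2, hQ2⟩ := ih x2 b w2 hlen2 hpath2 hinv2
              refine ⟨SimpleGraph.Walk.cons (hdet1 h01 hF0)
                (SimpleGraph.Walk.cons (hdet2 h01 hF0)
                  (SimpleGraph.Walk.cons (hGsub h12 hF1) Q2)), ?_⟩
              have hmin := hcmin a x1 h01 x2 hax2.symm hx1x2.symm
              have htri : dist a x2 ≤ dist a x1 + dist x1 x2 := dist_triangle _ _ _
              have hcm : dist x2 x1 = dist x1 x2 := dist_comm _ _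
              have h0 : (0:ℝ) ≤ dist a x1 := dist_nonneg
              simp only [wlen_cons', wlen_nil'] at hQ2 ⊢
              linarith
            cases w2 with
            | nil =>
              -- pattern [F, non-F] at the end
              refine ⟨SimpleGraph.Walk.cons (hdet1 h01 hF0)
                (SimpleGraph.Walk.cons (hdet2 h01 hF0)
                  (SimpleGraph.Walk.cons (hGsub h12 hF1) SimpleGraph.Walk.nil)), ?_⟩
              have hmin := hcmin a x1 h01 b hax2.symm hx1x2.symm
              have htri : dist a b ≤ dist a x1 + dist x1 b := dist_triangle _ _ _
              have hcm : dist b x1 = dist x1 b := dist_comm _ _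
              have h0 : (0:ℝ) ≤ dist a x1 := dist_nonneg
              simp only [wlen_cons', wlen_nil']
              linarith
            | cons h23 w3 =>
              rename_i x3
              cases w3 with
              | nil =>
                -- three edges a-x1-x2-b with b = b
                by_cases hF2 : s(x2, b) ∈ F
                · -- pattern [F, non-F, F] : the delicate case
                  -- distinctness
                  have hx1b : x1 ≠ b := by
                    intro hEq
                    exact hnm1 (by rw [SimpleGraph.Walk.support_cons]
                                   exact List.mem_cons_of_mem _
                                     (hEq ▸ SimpleGraph.Walk.start_mem_support _))
                  have hab : a ≠ b := by
                    intro hEq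
                    apply hnm0
                    rw [SimpleGraph.Walk.support_cons]
                    refine List.mem_cons_of_mem _ ?_
                    rw [SimpleGraph.Walk.support_cons]
                    exact List.mem_cons_of_mem _
                      (hEq ▸ SimpleGraph.Walk.start_mem_support _)
                  have hx2b : x2 ≠ b := h23.ne
                  by_cases hc1a : c x1 x2 = a
                  · -- shortcut: {a, x2} is an edge of G \ F
                    have hA : (G.deleteEdges F).Adj a x2 := by
                      refine SimpleGraph.deleteEdges_adj.mpr ⟨?_, ?_⟩
                      · have := hAdj2 h12
                        rwa [hc1a] at this
                      · intro hmem
                        have heq := hFuniq _ hF2 _ hmem x2 (by simp) (by simp)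
                        rw [Sym2.eq_iff] at heq
                        rcases heq with ⟨h1, _⟩ | ⟨_, h2⟩
                        · exact hax2 h1.symm
                        · exact hab h2.symm
                    refine ⟨SimpleGraph.Walk.cons hA
                      (SimpleGraph.Walk.cons (hdet1 h23 hF2)
                        (SimpleGraph.Walk.cons (hdet2 h23 hF2) SimpleGraph.Walk.nil)), ?_⟩
                    have hmin := hcmin x2 b h23 x1 hx1x2 hx1b
                    have htri1 : dist a x2 ≤ dist a x1 + dist x1 x2 := dist_triangle _ _ _
                    have htri2 : dist x1 b ≤ dist x1 x2 + dist x2 b := dist_triangle _ _ _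
                    have hcm : dist x2 x1 = dist x1 x2 := dist_comm _ _
                    have h0 : (0:ℝ) ≤ dist a x1 := dist_nonneg
                    have h0' : (0:ℝ) ≤ dist x2 b := dist_nonneg
                    simp only [wlen_cons', wlen_nil']
                    linarith
                  · by_cases hc1b : c x1 x2 = b
                    · -- shortcut: {x1, b} is an edge of G \ F
                      have hB : (G.deleteEdges F).Adj x1 b := by
                        refine SimpleGraph.deleteEdges_adj.mpr ⟨?_, ?_⟩
                        · have := hAdj1 h12
                          rwa [hc1b] at this
                        · intro hmem
                          have heq := hFuniq _ hF0 _ hmem x1 (by simp) (by simp)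
                          rw [Sym2.eq_iff] at heq
                          rcases heq with ⟨h1, h2⟩ | ⟨h1, _⟩
                          · exact hx1b (h1 ▸ h2)
                          · exact hab h1
                      refine ⟨SimpleGraph.Walk.cons (hdet1 h01 hF0)
                        (SimpleGraph.Walk.cons (hdet2 h01 hF0)
                          (SimpleGraph.Walk.cons hB SimpleGraph.Walk.nil)), ?_⟩
                      have hmin := hcmin a x1 h01 x2 hax2.symm hx1x2.symm
                      have htri1 : dist a x2 ≤ dist a x1 + dist x1 x2 := dist_triangle _ _ _
                      have htri2 : dist x1 b ≤ dist x1 x2 + dist x2 b := dist_triangle _ _ _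
                      have hcm : dist x2 x1 = dist x1 x2 := dist_comm _ _
                      have h0 : (0:ℝ) ≤ dist a x1 := dist_nonneg
                      have h0' : (0:ℝ) ≤ dist x2 b := dist_nonneg
                      simp only [wlen_cons', wlen_nil']
                      linarith
                    · -- generic case: detour both F-edges; use minimality of c x1 x2
                      have hc1x1 : c x1 x2 ≠ x1 := (hcne x1 x2 h12).1
                      have hc1x2 : c x1 x2 ≠ x2 := (hcne x1 x2 h12).2
                      refine ⟨SimpleGraph.Walk.cons (hdet1 h01 hF0)
                        (SimpleGraph.Walk.cons (hdet2 h01 hF0)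
                          (SimpleGraph.Walk.cons (hGsub h12 hF1)
                            (SimpleGraph.Walk.cons (hdet1 h23 hF2)
                              (SimpleGraph.Walk.cons (hdet2 h23 hF2)
                                SimpleGraph.Walk.nil)))), ?_⟩
                      have hA := hcmin a x1 h01 (c x1 x2) hc1a hc1x1
                      have hB := hcmin x2 b h23 (c x1 x2) hc1x2 hc1b
                      have hC0 := hcmin x1 x2 h12 a hax1 hax2
                      have hC1 := hcmin x1 x2 h12 b hx1b.symm hx2b.symm
                      have h1 : dist a (c x1 x2) ≤ dist a x1 + dist x1 (c x1 x2) :=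
                        dist_triangle _ _ _
                      have h2 : dist (c x1 x2) x1 = dist x1 (c x1 x2) := dist_comm _ _
                      have h3 : dist (c x1 x2) b ≤ dist (c x1 x2) x2 + dist x2 b :=
                        dist_triangle _ _ _
                      have h4 : dist x2 (c x1 x2) = dist (c x1 x2) x2 := dist_comm _ _
                      have h5 : dist x1 a = dist a x1 := dist_comm _ _
                      have h6 : dist a x2 ≤ dist a x1 + dist x1 x2 := dist_triangle _ _ _
                      have h7 : dist x1 b ≤ dist x1 x2 + dist x2 b := dist_triangle _ _ _
                      have h8 : dist b x2 = dist x2 b := dist_comm _ _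
                      simp only [wlen_cons', wlen_nil']
                      linarith
                · -- last edge not in F: ordinary pair step
                  refine pairStep ?_
                  intro _ e he
                  simp only [SimpleGraph.Walk.edges_cons, SimpleGraph.Walk.edges_nil,
                    List.mem_singleton, List.mem_cons, List.not_mem_nil, or_false] at he
                  rwa [he]
              | cons h34 w4 =>
                -- plenty of path remains: ordinary pair step
                refine pairStep ?_
                intro hl
                exfalso
                simp only [SimpleGraph.Walk.length_cons] at hl
                omega
        · -- first edge is not in F
          cases w1 with
          | nil =>
            refine ⟨SimpleGraph.Walk.cons (hGsub h01 hF0) SimpleGraph.Walk.nil, ?_⟩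
            have h0 : (0:ℝ) ≤ dist a b := dist_nonneg
            simp only [wlen_cons', wlen_nil']
            linarith
          | cons h12 w2 =>
            rename_i x2
            rw [SimpleGraph.Walk.cons_isPath_iff] at hpath1
            obtain ⟨hpath2, hnm1⟩ := hpath1
            have hax1 : a ≠ x1 := h01.ne
            have hx1x2 : x1 ≠ x2 := h12.ne
            have hax2 : a ≠ x2 := by
              intro hEq
              exact hnm0 (by rw [SimpleGraph.Walk.support_cons]
                             exact List.mem_cons_of_mem _ (hEq ▸ w2.start_mem_support))
            cases w2 with
            | nil =>
              -- two edges a-x1-b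
              by_cases hF1 : s(x1, b) ∈ F
              · -- pattern [non-F, F] at the end: detour the last edge via a
                refine ⟨SimpleGraph.Walk.cons (hGsub h01 hF0)
                  (SimpleGraph.Walk.cons (hdet1 h12 hF1)
                    (SimpleGraph.Walk.cons (hdet2 h12 hF1) SimpleGraph.Walk.nil)), ?_⟩
                have hmin := hcmin x1 b h12 a hax1 hax2
                have htri : dist a b ≤ dist a x1 + dist x1 b := dist_triangle _ _ _
                have hcm : dist x1 a = dist a x1 := dist_comm _ _
                have h0 : (0:ℝ) ≤ dist a x1 := dist_nonneg
                have h0' : (0:ℝ) ≤ dist x1 b := dist_nonneg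
                simp only [wlen_cons', wlen_nil']
                linarith
              · -- both edges survive
                refine ⟨SimpleGraph.Walk.cons (hGsub h01 hF0)
                  (SimpleGraph.Walk.cons (hGsub h12 hF1) SimpleGraph.Walk.nil), ?_⟩
                have h0 : (0:ℝ) ≤ dist a x1 := dist_nonneg
                have h0' : (0:ℝ) ≤ dist x1 b := dist_nonneg
                simp only [wlen_cons', wlen_nil']
                linarith
            | cons h23 w3 =>
              -- take the first edge and recurse
              have hlen1 : (SimpleGraph.Walk.cons h12 (SimpleGraph.Walk.cons h23 w3)).length ≤ n := by
                simp only [SimpleGraph.Walk.length_cons] at hlen ⊢; omega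
              have hpath1' : (SimpleGraph.Walk.cons h12 (SimpleGraph.Walk.cons h23 w3)).IsPath := by
                rw [SimpleGraph.Walk.cons_isPath_iff]; exact ⟨hpath2, hnm1⟩
              obtain ⟨Q1, hQ1⟩ := ih x1 b _ hlen1 hpath1' (by
                intro hl; exfalso
                simp only [SimpleGraph.Walk.length_cons] at hl
                omega)
              refine ⟨SimpleGraph.Walk.cons (hGsub h01 hF0) Q1, ?_⟩
              have h0 : (0:ℝ) ≤ dist a x1 := dist_nonneg
              simp only [wlen_cons', wlen_nil'] at hQ1 ⊢
              linarith
  obtain ⟨Q, hQ⟩ := key P'.length p q P' le_rfl hP'path (by intro h; omega)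
  exact ⟨Q, hQ⟩
end

section
/- The WSPD-based graph G is an f-faulty-degree (1+ε)-spanner for S with at most (2f+1)²·m edges: for every set F of edges of G whose maximum degree is at most f, and for all points p, q ∈ S, the shortest-path distance between p and q in G \ F is at most (1+ε) times the shortest-path distance between p and q in K_S \ F. -/
open Real

/-!
Let `s(p, q)` survive the faults `F` and let the pair `{A_i, B_i}` separate `p ∈ A_i` from
`q ∈ B_i`. Since `p`, `q` and any point lie on at most `f` faulty edges, and `A'_i` is either all
of `A_i` or has `2f + 1` points, one finds `a ∈ A'_i` and `b ∈ B'_i` such that `pa`, `ab`, `bq`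
are non-faulty (or `a = p`, `b = q`). The pairs `(p, a)` and `(b, q)` are strictly closer than
`(p, q)`, so by induction on the distance they are joined in `G \ F` by paths of stretch `1 + ε`,
and separation ratio `2 + 4 / ε` is exactly what keeps the detour `p ⇝ a — b ⇝ q` within
`(1 + ε) * dist p q`. Applying this to each edge of a walk of `K_S \ F` gives the spanner bound.
-/

section WalkLength

open SimpleGraph

variable {V : Type*} [PseudoMetricSpace V] {G : SimpleGraph V} {p q r : V}

lemma wlen_nonneg (w : G.Walk p q) : 0 ≤ wlen w :=
  List.sum_nonneg (by simp)

@[simp] lemma wlen_nil : wlen (Walk.nil : G.Walk p p) = 0 := by simp [wlen]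

@[simp] lemma wlen_cons (h : G.Adj p q) (w : G.Walk q r) :
    wlen (Walk.cons h w) = dist p q + wlen w := by
  simp [wlen]

@[simp] lemma wlen_append (w₁ : G.Walk p q) (w₂ : G.Walk q r) :
    wlen (w₁.append w₂) = wlen w₁ + wlen w₂ := by
  simp [wlen, Walk.darts_append]

lemma gdist_eq_iInf : gdist G p q = ⨅ w : G.Walk p q, wlen w := rfl

lemma gdist_nonneg : 0 ≤ gdist G p q := Real.iInf_nonneg wlen_nonneg

lemma gdist_le_wlen (w : G.Walk p q) : gdist G p q ≤ wlen w :=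
  ciInf_le ⟨0, by rintro _ ⟨w, rfl⟩; exact wlen_nonneg w⟩ w

@[simp] lemma gdist_self : gdist G p p = 0 :=
  le_antisymm (by simpa using gdist_le_wlen (Walk.nil : G.Walk p p)) gdist_nonneg

lemma gdist_of_not_reachable (h : ¬G.Reachable p q) : gdist G p q = 0 :=
  haveI : IsEmpty (G.Walk p q) := not_nonempty_iff.mp h
  Real.iInf_of_isEmpty _

lemma gdist_le_dist_of_adj (h : G.Adj p q) : gdist G p q ≤ dist p q := by
  simpa using gdist_le_wlen h.toWalk

lemma gdist_triangle (hpq : G.Reachable p q) (hqr : G.Reachable q r) :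
    gdist G p r ≤ gdist G p q + gdist G q r :=
  haveI : Nonempty (G.Walk p q) := hpq
  haveI : Nonempty (G.Walk q r) := hqr
  le_ciInf_add_ciInf fun w₁ w₂ => by simpa using gdist_le_wlen (w₁.append w₂)

end WalkLength

section Stretch

open SimpleGraph

variable {V : Type*} [PseudoMetricSpace V] {H T : SimpleGraph V} {t : ℝ} {p q a b : V}

def StretchLE (H : SimpleGraph V) (t : ℝ) (x y : V) : Prop :=
  H.Reachable x y ∧ gdist H x y ≤ t * dist x y

lemma StretchLE.refl (x : V) : StretchLE H t x x := ⟨Reachable.refl x, by simp⟩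

lemma StretchLE.of_adj_between (hpa : StretchLE H t p a) (hab : H.Adj a b)
    (hbq : StretchLE H t b q) (hle : t * dist p a + dist a b + t * dist b q ≤ t * dist p q) :
    StretchLE H t p q := by
  have hbq' : H.Reachable a q := hab.reachable.trans hbq.1
  refine ⟨hpa.1.trans hbq', ?_⟩
  calc gdist H p q ≤ gdist H p a + (gdist H a b + gdist H b q) :=
        (gdist_triangle hpa.1 hbq').trans
          (add_le_add_right (gdist_triangle hab.reachable hbq.1) _)
    _ ≤ t * dist p a + (dist a b + t * dist b q) :=
        add_le_add hpa.2 (add_le_add (gdist_le_dist_of_adj hab) hbq.2)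
    _ ≤ t * dist p q := by linarith

lemma gdist_le_mul_wlen_of_forall_adj (h : ∀ u v, T.Adj u v → StretchLE H t u v)
    (w : T.Walk p q) : H.Reachable p q ∧ gdist H p q ≤ t * wlen w := by
  induction w with
  | nil => exact ⟨Reachable.refl _, by simp⟩
  | @cons u v r huv w ih =>
    obtain ⟨hreach, hle⟩ := h u v huv
    refine ⟨hreach.trans ih.1, ?_⟩
    calc gdist H u r ≤ gdist H u v + gdist H v r := gdist_triangle hreach ih.1
      _ ≤ t * wlen (Walk.cons huv w) := by rw [wlen_cons, mul_add]; exact add_le_add hle ih.2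

lemma gdist_le_mul_gdist_of_forall_adj (hHT : H ≤ T) (ht : 0 ≤ t)
    (h : ∀ u v, T.Adj u v → StretchLE H t u v) (p q : V) :
    gdist H p q ≤ t * gdist T p q := by
  by_cases hT : T.Reachable p q
  · have : Nonempty (T.Walk p q) := hT
    rw [gdist_eq_iInf (G := T), Real.mul_iInf_of_nonneg ht]
    exact le_ciInf fun w => (gdist_le_mul_wlen_of_forall_adj h w).2
  · rw [gdist_of_not_reachable fun hH => hT (hH.mono hHT)]
    exact mul_nonneg ht gdist_nonneg

end Stretch

section Separation

variable {V : Type*} [PseudoMetricSpace V]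

def WellSeparated (s : ℝ) (X Y : Set V) : Prop :=
  ∀ x ∈ X, ∀ y ∈ Y, s * max (Metric.diam X) (Metric.diam Y) ≤ dist x y

namespace WellSeparated

variable {s ε : ℝ} {X Y : Set V} {p q a b : V}

lemma symm (h : WellSeparated s X Y) : WellSeparated s Y X := fun y hy x hx => by
  rw [max_comm, dist_comm]; exact h x hx y hy

lemma max_diam_lt (h : WellSeparated s X Y) (hs : 1 < s) (hp : p ∈ X) (hq : q ∈ Y)
    (hpq : 0 < dist p q) : max (Metric.diam X) (Metric.diam Y) < dist p q := by
  have hD : 0 ≤ max (Metric.diam X) (Metric.diam Y) := le_max_of_le_left Metric.diam_nonneg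
  nlinarith [h p hp q hq]

lemma dist_lt_of_mem_left (h : WellSeparated s X Y) (hs : 1 < s) (hX : Bornology.IsBounded X)
    (hp : p ∈ X) (hq : q ∈ Y) (hpq : 0 < dist p q) (ha : a ∈ X) : dist p a < dist p q :=
  ((Metric.dist_le_diam_of_mem hX hp ha).trans (le_max_left _ _)).trans_lt
    (h.max_diam_lt hs hp hq hpq)

lemma dist_lt_of_mem_right (h : WellSeparated s X Y) (hs : 1 < s) (hY : Bornology.IsBounded Y)
    (hp : p ∈ X) (hq : q ∈ Y) (hpq : 0 < dist p q) (hb : b ∈ Y) : dist b q < dist p q :=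
  ((Metric.dist_le_diam_of_mem hY hb hq).trans (le_max_right _ _)).trans_lt
    (h.max_diam_lt hs hp hq hpq)

lemma dist_pos (h : WellSeparated s X Y) (hs : 2 < s) (hX : Bornology.IsBounded X)
    (hY : Bornology.IsBounded Y) (hp : p ∈ X) (hq : q ∈ Y) (hpq : 0 < dist p q)
    (ha : a ∈ X) (hb : b ∈ Y) : 0 < dist a b := by
  have hpa := (Metric.dist_le_diam_of_mem hX hp ha).trans (le_max_left _ (Metric.diam Y))
  have hbq := (Metric.dist_le_diam_of_mem hY hb hq).trans (le_max_right (Metric.diam X) _)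
  have hD : 0 ≤ max (Metric.diam X) (Metric.diam Y) := le_max_of_le_left Metric.diam_nonneg
  nlinarith [h p hp q hq, h a ha b hb, dist_triangle4 p a b q]

lemma detour_le (h : WellSeparated (2 + 4 / ε) X Y) (hε : 0 < ε) (hX : Bornology.IsBounded X)
    (hY : Bornology.IsBounded Y) (hp : p ∈ X) (hq : q ∈ Y) (ha : a ∈ X) (hb : b ∈ Y) :
    (1 + ε) * dist p a + dist a b + (1 + ε) * dist b q ≤ (1 + ε) * dist p q := by
  set D := max (Metric.diam X) (Metric.diam Y)
  have hpa : dist p a ≤ D := (Metric.dist_le_diam_of_mem hX hp ha).trans (le_max_left _ _)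
  have hbq : dist b q ≤ D := (Metric.dist_le_diam_of_mem hY hb hq).trans (le_max_right _ _)
  have hsep : (2 * ε + 4) * D ≤ ε * dist p q := by
    have := mul_le_mul_of_nonneg_left (h p hp q hq) hε.le
    rwa [← mul_assoc, mul_add, mul_div_cancel₀ _ hε.ne', mul_comm ε 2] at this
  have hab : dist a b ≤ dist p a + dist p q + dist b q := by
    simpa [dist_comm] using dist_triangle4 a p q b
  nlinarith [mul_le_mul_of_nonneg_left hpa (by linarith : 0 ≤ 1 + ε),
    mul_le_mul_of_nonneg_left hbq (by linarith : 0 ≤ 1 + ε)]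

end WellSeparated

end Separation

section Faults

variable {V : Type*} {F : Set (Sym2 V)} {f : ℕ}

lemma maxDegLe.encard_setOf_mem_le (hF : maxDegLe F f) (v : V) :
    {x | s(v, x) ∈ F}.encard ≤ f := by
  have hinj : Set.InjOn (fun x => s(v, x)) {x | s(v, x) ∈ F} := fun _ _ _ _ h =>
    Sym2.congr_right.mp h
  rw [← hinj.encard_image]
  refine (Set.encard_le_encard ?_).trans (hF v)
  rintro _ ⟨x, hx, rfl⟩
  exact ⟨hx, Sym2.mem_mk_left v x⟩

variable [Finite V]

lemma eq_or_ncard_eq_of_ncard_eq_min {S S' : Set V} {k : ℕ} (hS' : S' ⊆ S)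
    (hcard : S'.ncard = min S.ncard k) : S' = S ∨ S'.ncard = k := by
  rcases le_total S.ncard k with hk | hk
  · exact .inl (Set.eq_of_subset_of_ncard_le hS' (by omega))
  · exact .inr (by omega)

lemma maxDegLe.exists_mem_of_ncard_eq_min (hF : maxDegLe F f) {S S' : Set V} {x y : V}
    (hS' : S' ⊆ S) (hcard : S'.ncard = min S.ncard (2 * f + 1)) (hx : x ∈ S)
    (hxy : s(x, y) ∉ F) : ∃ x' ∈ S', (x = x' ∨ s(x, x') ∉ F) ∧ s(x', y) ∉ F := by
  rcases eq_or_ncard_eq_of_ncard_eq_min hS' hcard with rfl | hk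
  · exact ⟨x, hx, .inl rfl, hxy⟩
  have hbad : ({z | s(x, z) ∈ F} ∪ {z | s(y, z) ∈ F}).encard < S'.encard := by
    rw [← (Set.toFinite S').cast_ncard_eq, hk]
    calc _ ≤ (f : ℕ∞) + f := (Set.encard_union_le _ _).trans
            (add_le_add (hF.encard_setOf_mem_le x) (hF.encard_setOf_mem_le y))
      _ < ((2 * f + 1 : ℕ) : ℕ∞) := by norm_cast; omega
  obtain ⟨x', hx', hgood⟩ :=
    Set.not_subset.mp fun hsub => (Set.encard_le_encard hsub).not_gt hbad
  simp only [Set.mem_union, Set.mem_ofPred_eq, not_or] at hgood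
  exact ⟨x', hx', .inr hgood.1, by rw [Sym2.eq_swap]; exact hgood.2⟩

end Faults

lemma Finite.induction_of_lt_map {α β : Type*} [Finite α] [Preorder β] (g : α → β)
    {P : α → Prop} (h : ∀ a, (∀ b, g b < g a → P b) → P a) (a : α) : P a :=
  haveI : IsTrans α (fun a b => g a < g b) := ⟨fun _ _ _ => lt_trans⟩
  haveI : Std.Irrefl (fun a b : α => g a < g b) := ⟨fun _ => lt_irrefl _⟩
  (Finite.wellFounded_of_trans_of_irrefl _).induction a h

section Spanner

variable {V : Type*} [Finite V] [MetricSpace V] {F : Set (Sym2 V)} {f : ℕ} {ε : ℝ}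

lemma stretchLE_of_wellSeparated {H : SimpleGraph V} (hε : 0 < ε) (hF : maxDegLe F f)
    {X Y X' Y' : Set V} (hws : WellSeparated (2 + 4 / ε) X Y) (hX' : X' ⊆ X) (hY' : Y' ⊆ Y)
    (hX'card : X'.ncard = min X.ncard (2 * f + 1))
    (hY'card : Y'.ncard = min Y.ncard (2 * f + 1))
    (hadj : ∀ a ∈ X', ∀ b ∈ Y', a ≠ b → s(a, b) ∉ F → H.Adj a b)
    {p q : V} (hp : p ∈ X) (hq : q ∈ Y) (hpq : p ≠ q) (hpqF : s(p, q) ∉ F)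
    (ih : ∀ x y, (x = y ∨ s(x, y) ∉ F) → dist x y < dist p q → StretchLE H (1 + ε) x y) :
    StretchLE H (1 + ε) p q := by
  obtain ⟨a, ha, hpa, haq⟩ := hF.exists_mem_of_ncard_eq_min hX' hX'card hp hpqF
  obtain ⟨b, hb, hqb, hba⟩ :=
    hF.exists_mem_of_ncard_eq_min hY' hY'card hq (by rwa [Sym2.eq_swap])
  have hs : (2 : ℝ) < 2 + 4 / ε := by linarith [div_pos four_pos hε]
  have hpq' : 0 < dist p q := dist_pos.mpr hpq
  have hXb := (Set.toFinite X).isBounded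
  have hYb := (Set.toFinite Y).isBounded
  have hab : a ≠ b := dist_pos.mp (hws.dist_pos hs hXb hYb hp hq hpq' (hX' ha) (hY' hb))
  refine .of_adj_between ?_ (hadj a ha b hb hab (by rwa [Sym2.eq_swap])) ?_
    (hws.detour_le hε hXb hYb hp hq (hX' ha) (hY' hb))
  · exact ih p a hpa (hws.dist_lt_of_mem_left (by linarith) hXb hp hq hpq' (hX' ha))
  · exact ih b q (hqb.imp Eq.symm fun h => by rwa [Sym2.eq_swap])
      (hws.dist_lt_of_mem_right (by linarith) hYb hp hq hpq' (hY' hb))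

lemma stretchLE_deleteEdges_of_wspd {ι : Type*} {A B A' B' : ι → Set V} {G : SimpleGraph V}
    (hε : 0 < ε) (hF : maxDegLe F f) (hws : ∀ i, WellSeparated (2 + 4 / ε) (A i) (B i))
    (hsep : ∀ p q : V, p ≠ q → ∃ i, (p ∈ A i ∧ q ∈ B i) ∨ (p ∈ B i ∧ q ∈ A i))
    (hA' : ∀ i, A' i ⊆ A i) (hB' : ∀ i, B' i ⊆ B i)
    (hA'card : ∀ i, (A' i).ncard = min (A i).ncard (2 * f + 1))
    (hB'card : ∀ i, (B' i).ncard = min (B i).ncard (2 * f + 1))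
    (hG : ∀ i, ∀ x ∈ A' i, ∀ y ∈ B' i, x ≠ y → G.Adj x y)
    (p q : V) (hpq : p = q ∨ s(p, q) ∉ F) : StretchLE (G.deleteEdges F) (1 + ε) p q := by
  suffices ∀ x : V × V, x.1 = x.2 ∨ s(x.1, x.2) ∉ F → StretchLE (G.deleteEdges F) (1 + ε) x.1 x.2
    from this (p, q) hpq
  refine Finite.induction_of_lt_map (fun x : V × V => dist x.1 x.2) ?_
  rintro ⟨p, q⟩ ih hpq
  dsimp only at ih hpq ⊢
  rcases hpq with rfl | hpqF
  · exact .refl p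
  by_cases hpq : p = q
  · subst hpq; exact .refl p
  have ih' x y (hxy : x = y ∨ s(x, y) ∉ F) (hlt : dist x y < dist p q) :=
    ih (x, y) hlt hxy
  obtain ⟨i, ⟨hp, hq⟩ | ⟨hp, hq⟩⟩ := hsep p q hpq
  · refine stretchLE_of_wellSeparated hε hF (hws i) (hA' i) (hB' i) (hA'card i) (hB'card i)
      (fun a ha b hb hab habF => ?_) hp hq hpq hpqF ih'
    exact SimpleGraph.deleteEdges_adj.mpr ⟨hG i a ha b hb hab, habF⟩
  · refine stretchLE_of_wellSeparated hε hF (hws i).symm (hB' i) (hA' i) (hB'card i) (hA'card i)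
      (fun a ha b hb hab habF => ?_) hp hq hpq hpqF ih'
    exact SimpleGraph.deleteEdges_adj.mpr ⟨(hG i b hb a ha hab.symm).symm, habF⟩

end Spanner

lemma ncard_edgeSet_le_of_forall_adj {V ι : Type*} [Finite V] [Fintype ι] {G : SimpleGraph V}
    {A' B' : ι → Set V} {k : ℕ}
    (hG : ∀ x y, G.Adj x y → ∃ i, (x ∈ A' i ∧ y ∈ B' i) ∨ (x ∈ B' i ∧ y ∈ A' i))
    (hA' : ∀ i, (A' i).ncard ≤ k) (hB' : ∀ i, (B' i).ncard ≤ k) :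
    G.edgeSet.ncard ≤ k ^ 2 * Fintype.card ι := by
  have hsub : G.edgeSet ⊆ ⋃ i, Function.uncurry Sym2.mk '' (A' i ×ˢ B' i) := by
    intro e
    induction e using Sym2.ind with
    | h x y =>
      intro he
      obtain ⟨i, ⟨hx, hy⟩ | ⟨hx, hy⟩⟩ := hG x y he
      · exact Set.mem_iUnion.mpr ⟨i, (x, y), ⟨hx, hy⟩, rfl⟩
      · exact Set.mem_iUnion.mpr ⟨i, (y, x), ⟨hy, hx⟩, Sym2.eq_swap⟩
  calc G.edgeSet.ncard ≤ (⋃ i, Function.uncurry Sym2.mk '' (A' i ×ˢ B' i)).ncard :=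
        Set.ncard_le_ncard hsub (Set.toFinite _)
    _ ≤ ∑ i, (Function.uncurry Sym2.mk '' (A' i ×ˢ B' i)).ncard := Set.ncard_iUnion_le_of_fintype _
    _ ≤ ∑ _i : ι, k ^ 2 := Finset.sum_le_sum fun i _ =>
        (Set.ncard_image_le (Set.toFinite _)).trans
          (by rw [Set.ncard_prod, sq]; exact Nat.mul_le_mul (hA' i) (hB' i))
    _ = k ^ 2 * Fintype.card ι := by simp [mul_comm]

theorem stmt9_general {V : Type*} [Fintype V] [MetricSpace V] (f m : ℕ) (ε : ℝ)
    (hε : 0 < ε)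
    -- a WSPD of size m with separation ratio c = 2 + 4/ε
    (A B : Fin m → Set V)
    (hws : ∀ i, ∀ x ∈ A i, ∀ y ∈ B i,
      (2 + 4 / ε) * max (Metric.diam (A i)) (Metric.diam (B i)) ≤ dist x y)
    (hsep : ∀ p q : V, p ≠ q →
      ∃! i : Fin m, (p ∈ A i ∧ q ∈ B i) ∨ (p ∈ B i ∧ q ∈ A i))
    -- the chosen subsets A'_i and B'_i
    (A' B' : Fin m → Set V)
    (hA'sub : ∀ i, A' i ⊆ A i) (hB'sub : ∀ i, B' i ⊆ B i)
    (hA'card : ∀ i, (A' i).ncard = min ((A i).ncard) (2 * f + 1))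
    (hB'card : ∀ i, (B' i).ncard = min ((B i).ncard) (2 * f + 1))
    -- G contains, for each i, the complete bipartite graph between A'_i and B'_i
    (G : SimpleGraph V)
    (hG : ∀ x y : V, x ≠ y →
      (G.Adj x y ↔ ∃ i : Fin m, (x ∈ A' i ∧ y ∈ B' i) ∨ (x ∈ B' i ∧ y ∈ A' i))) :
    G.edgeSet.ncard ≤ (2 * f + 1) ^ 2 * m ∧
    ∀ F : Set (Sym2 V), F ⊆ G.edgeSet → maxDegLe F f →
      ∀ p q : V, gdist (G.deleteEdges F) p q ≤
        (1 + ε) * gdist ((⊤ : SimpleGraph V).deleteEdges F) p q := by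
  refine ⟨?_, fun F _ hF p q => ?_⟩
  · simpa using ncard_edgeSet_le_of_forall_adj (fun x y h => (hG x y h.ne).mp h)
      (fun i => (hA'card i).trans_le (min_le_right _ _))
      (fun i => (hB'card i).trans_le (min_le_right _ _))
  · have hGadj i x (hx : x ∈ A' i) y (hy : y ∈ B' i) (hxy : x ≠ y) : G.Adj x y :=
      (hG x y hxy).mpr ⟨i, .inl ⟨hx, hy⟩⟩
    refine gdist_le_mul_gdist_of_forall_adj (SimpleGraph.deleteEdges_mono le_top)
      (by linarith) (fun u v huv => ?_) p q
    exact stretchLE_deleteEdges_of_wspd hε hF hws (fun p q h => (hsep p q h).exists)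
      hA'sub hB'sub hA'card hB'card hGadj u v (.inr (SimpleGraph.deleteEdges_adj.mp huv).2)

theorem stmt9 {V : Type*} [Fintype V] [MetricSpace V] (f m : ℕ) (ε : ℝ)
    (hf : 1 ≤ f) (hε : 0 < ε)
    -- a WSPD of size m with separation ratio c = 2 + 4/ε
    (A B : Fin m → Set V)
    (hAne : ∀ i, (A i).Nonempty) (hBne : ∀ i, (B i).Nonempty)
    (hws : ∀ i, ∀ x ∈ A i, ∀ y ∈ B i,
      (2 + 4 / ε) * max (Metric.diam (A i)) (Metric.diam (B i)) ≤ dist x y)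
    (hsep : ∀ p q : V, p ≠ q →
      ∃! i : Fin m, (p ∈ A i ∧ q ∈ B i) ∨ (p ∈ B i ∧ q ∈ A i))
    -- the chosen subsets A'_i and B'_i
    (A' B' : Fin m → Set V)
    (hA'sub : ∀ i, A' i ⊆ A i) (hB'sub : ∀ i, B' i ⊆ B i)
    (hA'card : ∀ i, (A' i).ncard = min ((A i).ncard) (2 * f + 1))
    (hB'card : ∀ i, (B' i).ncard = min ((B i).ncard) (2 * f + 1))
    -- G contains, for each i, the complete bipartite graph between A'_i and B'_i
    (G : SimpleGraph V)
    (hG : ∀ x y : V, x ≠ y →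
      (G.Adj x y ↔ ∃ i : Fin m, (x ∈ A' i ∧ y ∈ B' i) ∨ (x ∈ B' i ∧ y ∈ A' i))) :
    G.edgeSet.ncard ≤ (2 * f + 1) ^ 2 * m ∧
    ∀ F : Set (Sym2 V), F ⊆ G.edgeSet → maxDegLe F f →
      ∀ p q : V, gdist (G.deleteEdges F) p q ≤
        (1 + ε) * gdist ((⊤ : SimpleGraph V).deleteEdges F) p q :=
  stmt9_general f m ε hε A B hws hsep A' B' hA'sub hB'sub hA'card hB'card G hG
end
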